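/- Let g : B^N × B^N → B^N be any map. If the directed graph G̃_g is strongly connected, then G_g is chaotic on (X, d) in the sense of Devaney: (i) the set of periodic points of G_g is dense in X; (ii) G_g is topologically transitive (for any nonempty open sets U, V ⊆ X there exists k > 0 with G_g^{∘k}(U) ∩ V ≠ ∅); and (iii) G_g has sensitive dependence on initial conditions (there exists δ > 0 such that for every P ∈ X and every neighborhood V of P there exist Q ∈ V and n > 0 with d(G_g^{∘n}(P), G_g^{∘n}(Q)) > δ). -/

import Mathlib

open scoped BigOperators

/-- N-bit blocks: Boolean vectors of length N. -/
abbrev Block (N : ℕ) := Fin N → Bool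

/-- Infinite sequences of N-bit blocks. -/
abbrev Msg (N : ℕ) := ℕ → Block N

/-- The phase space X = B^N × S_N. -/
abbrev Phase (N : ℕ) := Block N × Msg N

/-- Hamming distance d_e on B^N. -/
noncomputable def dE {N : ℕ} (x y : Block N) : ℝ :=
  ∑ j : Fin N, if x j = y j then (0 : ℝ) else 1

/-- Distance d_m on message sequences. -/
noncomputable def dM {N : ℕ} (m m' : Msg N) : ℝ :=
  (9 / (N : ℝ)) * ∑' k : ℕ, (∑ i : Fin N, if m k i = m' k i then (0 : ℝ) else 1) / 10 ^ (k + 1)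

/-- The distance d on the phase space X. -/
noncomputable def dX {N : ℕ} (P Q : Phase N) : ℝ :=
  dE P.1 Q.1 + dM P.2 Q.2

/-- The shift on message sequences. -/
def shiftMsg {N : ℕ} (m : Msg N) : Msg N := fun k => m (k + 1)

/-- The dynamical system G_g(x, m) = (g(m^0, x), σ(m)). -/
def Gg {N : ℕ} (g : Block N → Block N → Block N) (P : Phase N) : Phase N :=
  (g (P.2 0) P.1, shiftMsg P.2)

/-- Open sets for the topology induced by the distance d on X. -/
def IsOpenX {N : ℕ} (U : Set (Phase N)) : Prop :=
  ∀ P ∈ U, ∃ ε : ℝ, 0 < ε ∧ ∀ Q : Phase N, dX P Q < ε → Q ∈ U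

/-!
The message sequence acts as a free control. The state after `n` steps depends only on the first
`n` message blocks, and two points with the same state whose messages agree on the first `K`
blocks are `10⁻ᴷ`-close. By strong connectivity any such prefix can be continued along a path of
`G̃_g` to any prescribed state and then by any prescribed tail, which gives transitivity;
closing the path back at the initial state and repeating the resulting word gives periodic
points arbitrarily close to any point. Sensitivity comes from the shift alone: flipping the
`K`-th message block moves a point by at most `10⁻ᴷ`, yet after `K` steps the two orbits read
different blocks, which puts them at distance at least `9 / (10 N)`.
-/

section Metric

variable {N : ℕ}

lemma dE_nonneg (x y : Block N) : 0 ≤ dE x y :=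
  Finset.sum_nonneg fun _ _ => by split_ifs <;> norm_num

lemma dE_le_card (x y : Block N) : dE x y ≤ N := by
  calc dE x y ≤ ∑ _j : Fin N, (1 : ℝ) := Finset.sum_le_sum fun _ _ => by split_ifs <;> norm_num
    _ = N := by simp

@[simp]
lemma dE_self (x : Block N) : dE x x = 0 := by simp [dE]

lemma one_le_dE_of_ne {x y : Block N} (h : x ≠ y) : 1 ≤ dE x y := by
  obtain ⟨j, hj⟩ := Function.ne_iff.1 h
  calc (1 : ℝ) = if x j = y j then 0 else 1 := by simp [hj]
    _ ≤ dE x y := Finset.single_le_sum (f := fun i => if x i = y i then (0 : ℝ) else 1)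
        (fun i _ => by split_ifs <;> norm_num) (Finset.mem_univ j)

lemma dM_eq_tsum_dE (m m' : Msg N) :
    dM m m' = 9 / (N : ℝ) * ∑' k, dE (m k) (m' k) / 10 ^ (k + 1) := rfl

lemma dE_div_pow_le (m m' : Msg N) (k : ℕ) :
    dE (m k) (m' k) / 10 ^ (k + 1) ≤ (N : ℝ) / 10 * (1 / 10) ^ k := by
  rw [one_div_pow, pow_succ']
  calc dE (m k) (m' k) / (10 * 10 ^ k) ≤ N / (10 * 10 ^ k) := by gcongr; exact dE_le_card _ _
    _ = (N : ℝ) / 10 * (1 / 10 ^ k) := by field_simp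

lemma summable_dE_div_pow (m m' : Msg N) :
    Summable fun k => dE (m k) (m' k) / 10 ^ (k + 1) :=
  .of_nonneg_of_le (fun _ => div_nonneg (dE_nonneg _ _) (by positivity))
    (dE_div_pow_le m m')
    ((summable_geometric_of_lt_one (by norm_num) (by norm_num)).mul_left _)

lemma dM_le_of_forall_lt_eq {m m' : Msg N} (K : ℕ) (h : ∀ k < K, m k = m' k) :
    dM m m' ≤ (1 / 10) ^ K := by
  have hhead : ∑ k ∈ Finset.range K, dE (m k) (m' k) / 10 ^ (k + 1) = 0 :=
    Finset.sum_eq_zero fun k hk => by simp [h k (Finset.mem_range.1 hk)]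
  have htail : ∑' k, dE (m (k + K)) (m' (k + K)) / 10 ^ (k + K + 1)
      ≤ ∑' k, (N : ℝ) / 10 * (1 / 10) ^ K * (1 / 10) ^ k := by
    refine Summable.tsum_le_tsum (fun k => ?_)
      ((summable_nat_add_iff K).2 (summable_dE_div_pow m m'))
      ((summable_geometric_of_lt_one (by norm_num) (by norm_num)).mul_left _)
    rw [mul_assoc, ← pow_add, add_comm K k]
    exact dE_div_pow_le m m' (k + K)
  rw [dM_eq_tsum_dE, ← (summable_dE_div_pow m m').sum_add_tsum_nat_add K, hhead, zero_add]
  calc 9 / (N : ℝ) * ∑' k, dE (m (k + K)) (m' (k + K)) / 10 ^ (k + K + 1)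
      ≤ 9 / (N : ℝ) * ∑' k, (N : ℝ) / 10 * (1 / 10) ^ K * (1 / 10) ^ k := by gcongr
    _ = 9 / (N : ℝ) * N * (1 / 10) ^ K / 9 := by
      rw [tsum_mul_left, tsum_geometric_of_lt_one (by norm_num) (by norm_num)]; ring
    _ ≤ (1 / 10) ^ K := by
      rcases N.eq_zero_or_pos with rfl | hN
      · simp
      · rw [div_mul_cancel₀ _ (by positivity), mul_div_cancel_left₀ _ (by norm_num)]

lemma le_dM_of_head_ne (hN : 0 < N) {m m' : Msg N} (h : m 0 ≠ m' 0) :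
    9 / (10 * (N : ℝ)) ≤ dM m m' := by
  have hfirst : 1 / 10 ≤ dE (m 0) (m' 0) / 10 ^ (0 + 1) := by
    have := one_le_dE_of_ne h
    rw [zero_add, pow_one]; linarith
  calc 9 / (10 * (N : ℝ)) = 9 / (N : ℝ) * (1 / 10) := by field_simp
    _ ≤ 9 / (N : ℝ) * ∑' k, dE (m k) (m' k) / 10 ^ (k + 1) := by
      gcongr
      exact hfirst.trans <| (summable_dE_div_pow m m').le_tsum 0
        fun k _ => div_nonneg (dE_nonneg _ _) (by positivity)

end Metric

section Cylinder

variable {N : ℕ}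

lemma exists_cylinder_subset_ball (P : Phase N) {ε : ℝ} (hε : 0 < ε) :
    ∃ K, 0 < K ∧ ∀ m : Msg N, (∀ k < K, m k = P.2 k) → dX P (P.1, m) < ε := by
  obtain ⟨K, hK⟩ := exists_pow_lt_of_lt_one hε (by norm_num : (1 / 10 : ℝ) < 1)
  refine ⟨K + 1, K.succ_pos, fun m hm => ?_⟩
  calc dX P (P.1, m) = dM P.2 m := by simp [dX]
    _ ≤ (1 / 10) ^ (K + 1) := dM_le_of_forall_lt_eq _ fun k hk => (hm k hk).symm
    _ < ε := lt_of_le_of_lt (pow_le_pow_of_le_one (by norm_num) (by norm_num) K.le_succ) hK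

lemma IsOpenX.exists_cylinder_subset {U : Set (Phase N)} (hU : IsOpenX U) {P : Phase N}
    (hP : P ∈ U) : ∃ K, 0 < K ∧ ∀ m : Msg N, (∀ k < K, m k = P.2 k) → (P.1, m) ∈ U := by
  obtain ⟨ε, hε, hball⟩ := hU P hP
  obtain ⟨K, hK, hcyl⟩ := exists_cylinder_subset_ball P hε
  exact ⟨K, hK, fun m hm => hball _ (hcyl m hm)⟩

lemma le_dX_of_snd_head_ne (hN : 0 < N) {P Q : Phase N} (h : P.2 0 ≠ Q.2 0) :
    9 / (10 * (N : ℝ)) ≤ dX P Q :=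
  (le_dM_of_head_ne hN h).trans (le_add_of_nonneg_left (dE_nonneg _ _))

end Cylinder

section Dynamics

variable {N : ℕ} (g : Block N → Block N → Block N)

lemma Gg_iterate_snd (n : ℕ) (P : Phase N) : ((Gg g)^[n] P).2 = fun k => P.2 (k + n) := by
  induction n generalizing P with
  | zero => rfl
  | succ n ih =>
    rw [Function.iterate_succ_apply, ih]
    funext k
    exact congrArg P.2 (by omega)

lemma Gg_iterate_fst_congr {n : ℕ} {P Q : Phase N} (h₁ : P.1 = Q.1)
    (h₂ : ∀ k < n, P.2 k = Q.2 k) : ((Gg g)^[n] P).1 = ((Gg g)^[n] Q).1 := by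
  induction n generalizing P Q with
  | zero => exact h₁
  | succ n ih =>
    rw [Function.iterate_succ_apply, Function.iterate_succ_apply]
    refine ih ?_ fun k hk => h₂ (k + 1) (by omega)
    simp only [Gg, h₁, h₂ 0 n.succ_pos]

lemma exists_Gg_iterate_eq_of_reflTransGen {a b : Block N}
    (h : Relation.ReflTransGen (fun a b => ∃ m : Block N, g m a = b) a b) (m' : Msg N) :
    ∃ n m, (Gg g)^[n] (a, m) = (b, m') := by
  induction h using Relation.ReflTransGen.head_induction_on with
  | refl => exact ⟨0, m', rfl⟩
  | head hstep _ ih =>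
    obtain ⟨c, hc⟩ := hstep
    obtain ⟨n, m, hm⟩ := ih
    refine ⟨n + 1, fun | 0 => c | k + 1 => m k, ?_⟩
    rw [Function.iterate_succ_apply, ← hm, ← hc]
    rfl

lemma exists_Gg_iterate_eq_of_forall_lt_eq
    (hsc : ∀ x y : Block N, Relation.ReflTransGen (fun a b => ∃ m : Block N, g m a = b) x y)
    (P Q : Phase N) (K : ℕ) :
    ∃ n m, K ≤ n ∧ (∀ k < K, m k = P.2 k) ∧ (Gg g)^[n] (P.1, m) = Q := by
  obtain ⟨L, w, hw⟩ :=
    exists_Gg_iterate_eq_of_reflTransGen g (hsc ((Gg g)^[K] P).1 Q.1) Q.2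
  let m : Msg N := fun k => if k < K then P.2 k else w (k - K)
  have hm : ∀ k < K, m k = P.2 k := fun k hk => if_pos hk
  have hK : (Gg g)^[K] (P.1, m) = (((Gg g)^[K] P).1, w) := by
    refine Prod.ext (Gg_iterate_fst_congr g rfl hm) ?_
    rw [Gg_iterate_snd]
    funext k
    simp [m]
  refine ⟨L + K, m, K.le_add_left L, hm, ?_⟩
  rw [Function.iterate_add_apply, hK, hw]

lemma isPeriodicPt_Gg_mod {n : ℕ} {x : Block N} {m : Msg N}
    (h : ((Gg g)^[n] (x, m)).1 = x) :
    Function.IsPeriodicPt (Gg g) n (x, fun k => m (k % n)) := by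
  refine Prod.ext ?_ ?_
  · exact (Gg_iterate_fst_congr g (P := (x, fun k => m (k % n))) (Q := (x, m)) rfl fun k hk => by
      simp [Nat.mod_eq_of_lt hk]).trans h
  · rw [Gg_iterate_snd]
    funext k
    simp

end Dynamics

section Devaney

variable {N : ℕ} {g : Block N → Block N → Block N}

lemma Gg_exists_periodicPt_near
    (hsc : ∀ x y : Block N, Relation.ReflTransGen (fun a b => ∃ m : Block N, g m a = b) x y)
    (P : Phase N) {ε : ℝ} (hε : 0 < ε) :
    ∃ (Q : Phase N) (n : ℕ), 1 ≤ n ∧ (Gg g)^[n] Q = Q ∧ dX P Q < ε := by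
  obtain ⟨K, hK, hcyl⟩ := exists_cylinder_subset_ball P hε
  obtain ⟨n, m, hKn, hm, hn⟩ := exists_Gg_iterate_eq_of_forall_lt_eq g hsc P P K
  refine ⟨(P.1, fun k => m (k % n)), n, hK.trans_le hKn, isPeriodicPt_Gg_mod g (by rw [hn]),
    hcyl _ fun k hk => ?_⟩
  rw [Nat.mod_eq_of_lt (hk.trans_le hKn), hm k hk]

lemma Gg_transitive
    (hsc : ∀ x y : Block N, Relation.ReflTransGen (fun a b => ∃ m : Block N, g m a = b) x y)
    {U V : Set (Phase N)} (hU : IsOpenX U) (hUne : U.Nonempty) (hVne : V.Nonempty) :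
    ∃ k : ℕ, 0 < k ∧ ((Gg g)^[k] '' U ∩ V).Nonempty := by
  obtain ⟨P, hP⟩ := hUne
  obtain ⟨Q, hQ⟩ := hVne
  obtain ⟨K, hK, hcyl⟩ := hU.exists_cylinder_subset hP
  obtain ⟨n, m, hKn, hm, hn⟩ := exists_Gg_iterate_eq_of_forall_lt_eq g hsc P Q K
  exact ⟨n, hK.trans_le hKn, Q, ⟨_, hcyl m hm, hn⟩, hQ⟩

lemma Gg_sensitive (hN : 0 < N) (P : Phase N) {V : Set (Phase N)} (hV : IsOpenX V)
    (hP : P ∈ V) :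
    ∃ Q ∈ V, ∃ n : ℕ, 0 < n ∧ dX ((Gg g)^[n] P) ((Gg g)^[n] Q) > 1 / (2 * N) := by
  obtain ⟨K, hK, hcyl⟩ := hV.exists_cylinder_subset hP
  let m := Function.update P.2 K fun i => !P.2 K i
  have hflip : P.2 K ≠ m K := fun h => by
    simpa [m] using congrFun h ⟨0, hN⟩
  refine ⟨(P.1, m), hcyl m fun k hk => Function.update_of_ne hk.ne _ _, K, hK, ?_⟩
  refine lt_of_lt_of_le ?_ (le_dX_of_snd_head_ne hN ?_)
  · have : (0 : ℝ) < N := Nat.cast_pos.2 hN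
    rw [div_lt_div_iff₀ (by positivity) (by positivity)]
    linarith
  · simpa [Gg_iterate_snd] using hflip

end Devaney

/-- if the directed graph of g is strongly connected, then G_g is chaotic
on (X, d) in the sense of Devaney: (i) periodic points are dense, (ii) G_g is
topologically transitive, (iii) G_g has sensitive dependence on initial conditions. -/
theorem Gg_chaotic_of_strongly_connected
    {N : ℕ} (hN : 1 ≤ N) (g : Block N → Block N → Block N)
    (hsc : ∀ x y : Block N, Relation.ReflTransGen (fun a b => ∃ m : Block N, g m a = b) x y) :
    (∀ (P : Phase N) (ε : ℝ), 0 < ε →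
        ∃ (Q : Phase N) (n : ℕ), 1 ≤ n ∧ (Gg g)^[n] Q = Q ∧ dX P Q < ε) ∧
    (∀ U V : Set (Phase N), IsOpenX U → IsOpenX V → U.Nonempty → V.Nonempty →
        ∃ k : ℕ, 0 < k ∧ ((Gg g)^[k] '' U ∩ V).Nonempty) ∧
    (∃ δ : ℝ, 0 < δ ∧ ∀ P : Phase N, ∀ V : Set (Phase N), IsOpenX V → P ∈ V →
        ∃ Q ∈ V, ∃ n : ℕ, 0 < n ∧ dX ((Gg g)^[n] P) ((Gg g)^[n] Q) > δ) :=
  ⟨fun P _ hε => Gg_exists_periodicPt_near hsc P hε,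
    fun _ _ hU _ hUne hVne => Gg_transitive hsc hU hUne hVne,
    1 / (2 * N), by positivity, fun P _ hV hP => Gg_sensitive hN P hV hP⟩
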